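/- Let P(t) be the solution on [0,T] of the matrix Riccati equation dP/dt − P²/λ + Q + Q̄ = 0 with P(T) = Q_T + Q̄_T, and let Σ(t) solve dΣ/dt − (1/λ)(ΣP + PΣ) − (1/λ)Σ² + S*Q̄S − (Q̄S + S*Q̄) = 0 with Σ(T) = S_T*Q̄_T S_T − (Q̄_T S_T + S_T*Q̄_T). Then the map U(X,t) = P(t)X + Σ(t) E X from H×[0,T] to H satisfies the master equation ∂U/∂t(X,t) − (1/λ) D_X U(X,t) U(X,t) + (Q+Q̄)X + (S*Q̄S − Q̄S − S*Q̄) E X = 0 with terminal condition U(X,T) = (Q_T+Q̄_T)X + (S_T*Q̄_T S_T − Q̄_T S_T − S_T*Q̄_T) E X, where D_X U(X,t) is the Fréchet derivative of U in X, which acts by D_X U(X,t)Z = P(t)Z + Σ(t) E Z. -/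

import Mathlib

/-!
For fixed `t`, `U(·,t)` is the bounded linear operator `X ↦ P(t) X + Σ(t) E X`, so it is its own
Fréchet derivative. Since `E` is linear and fixes constants, operators of this form compose as
`(A, B) ∘ (C, D) = (AC, AD + BC + BD)`, hence `D_X U U = (P², PΣ + ΣP + Σ²)` applied to `X`. The
operator depends linearly on the pair `(P, Σ)`, so its time derivative is `(P', Σ')` applied to `X`,
and the two Riccati equations say exactly that
`(P', Σ') = (1/λ) (P², PΣ + ΣP + Σ²) - (Q + Q̄, S*Q̄S - Q̄S - S*Q̄)`.
-/

open MeasureTheory Set ContinuousLinearMap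
open scoped RealInnerProductSpace

variable {Ω : Type*} [MeasurableSpace Ω] {n : ℕ}

/-- The expectation `E X ∈ ℝⁿ` of a square-integrable random variable `X ∈ L²(Ω;ℝⁿ)`. -/
noncomputable def expVal (μ : Measure Ω) [IsProbabilityMeasure μ]
    (X : Lp (EuclideanSpace ℝ (Fin n)) 2 μ) : EuclideanSpace ℝ (Fin n) :=
  ∫ ω, X ω ∂μ

/-- The map `U(X,t) = P(t) X + Σ(t) E X` from `L²(Ω;ℝⁿ) × [0,T]` to `L²(Ω;ℝⁿ)`. -/
noncomputable def Uq (μ : Measure Ω) [IsProbabilityMeasure μ]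
    (P Sg : ℝ → EuclideanSpace ℝ (Fin n) →L[ℝ] EuclideanSpace ℝ (Fin n))
    (X : Lp (EuclideanSpace ℝ (Fin n)) 2 μ) (t : ℝ) :
    Lp (EuclideanSpace ℝ (Fin n)) 2 μ :=
  (P t).compLp X + Lp.const 2 μ (Sg t (expVal μ X))

theorem MeasureTheory.Lp.integrable {E : Type*} [NormedAddCommGroup E] {μ : Measure Ω}
    {p : ENNReal} [IsFiniteMeasure μ] [Fact (1 ≤ p)] (f : Lp E p μ) : Integrable f μ :=
  (Lp.memLp f).integrable Fact.out

section

variable {E F G : Type*} [NormedAddCommGroup E] [NormedSpace ℝ E]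
  [NormedAddCommGroup F] [NormedSpace ℝ F] [NormedAddCommGroup G] [NormedSpace ℝ G]
  {μ : Measure Ω} {p : ENNReal}

namespace MeasureTheory.Lp

theorem norm_integral_le [IsProbabilityMeasure μ] [Fact (1 ≤ p)] (f : Lp E p μ) :
    ‖∫ ω, f ω ∂μ‖ ≤ ‖f‖ :=
  calc ‖∫ ω, f ω ∂μ‖ ≤ ∫ ω, ‖f ω‖ ∂μ := norm_integral_le_integral_norm _
    _ = (eLpNorm f 1 μ).toReal := by
      rw [integral_norm_eq_lintegral_enorm (Lp.aestronglyMeasurable f),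
        eLpNorm_one_eq_lintegral_enorm]
    _ ≤ ‖f‖ := by
      rw [Lp.norm_def]
      exact ENNReal.toReal_mono (Lp.eLpNorm_ne_top f)
        (eLpNorm_le_eLpNorm_of_exponent_le Fact.out (Lp.aestronglyMeasurable f))

variable (μ p) in
noncomputable def integralCLM [IsProbabilityMeasure μ] [Fact (1 ≤ p)] : Lp E p μ →L[ℝ] E :=
  LinearMap.mkContinuous
    { toFun := fun f => ∫ ω, f ω ∂μ
      map_add' := fun f g => by
        rw [integral_congr_ae (Lp.coeFn_add f g)]
        exact integral_add (Lp.integrable f) (Lp.integrable g)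
      map_smul' := fun c f => by
        rw [integral_congr_ae (Lp.coeFn_smul c f)]
        exact integral_smul c _ }
    1 (fun f => (Lp.norm_integral_le f).trans_eq (one_mul _).symm)

@[simp] theorem integralCLM_apply [IsProbabilityMeasure μ] [Fact (1 ≤ p)] (f : Lp E p μ) :
    integralCLM μ p f = ∫ ω, f ω ∂μ := rfl

theorem integral_const [IsProbabilityMeasure μ] [CompleteSpace E] (c : E) :
    ∫ ω, Lp.const p μ c ω ∂μ = c := by
  rw [integral_congr_ae (Lp.coeFn_const p μ c)]
  simp

end MeasureTheory.Lp

namespace ContinuousLinearMap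

theorem integral_compLp_comm [IsFiniteMeasure μ] [Fact (1 ≤ p)] [CompleteSpace E]
    [CompleteSpace F] (A : E →L[ℝ] F) (f : Lp E p μ) :
    ∫ ω, A.compLp f ω ∂μ = A (∫ ω, f ω ∂μ) := by
  rw [A.integral_compLp, A.integral_comp_comm (Lp.integrable f)]

theorem comp_compLp (A : F →L[ℝ] G) (B : E →L[ℝ] F) (f : Lp E p μ) :
    (A ∘L B).compLp f = A.compLp (B.compLp f) := by
  apply Lp.ext
  filter_upwards [(A ∘L B).coeFn_compLp f, A.coeFn_compLp (B.compLp f), B.coeFn_compLp f]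
    with ω hAB hA hB
  rw [hAB, hA, hB, comp_apply]

theorem compLp_add (A : E →L[ℝ] F) (f g : Lp E p μ) :
    A.compLp (f + g) = A.compLp f + A.compLp g :=
  map_add (A.compLpₗ p μ) f g

theorem sub_compLp (A C : E →L[ℝ] F) (f : Lp E p μ) :
    (A - C).compLp f = A.compLp f - C.compLp f := by
  rw [sub_eq_add_neg, add_compLp, ← neg_one_smul ℝ C, smul_compLp, neg_one_smul,
    ← sub_eq_add_neg]

theorem compLp_const [IsFiniteMeasure μ] (A : E →L[ℝ] F) (c : E) :
    A.compLp (Lp.const p μ c) = Lp.const p μ (A c) := by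
  apply Lp.ext
  filter_upwards [A.coeFn_compLp (Lp.const p μ c), Lp.coeFn_const p μ c,
    Lp.coeFn_const p μ (A c)] with ω hA hc hAc
  rw [hA, hc, hAc, Function.const_apply, Function.const_apply]

end ContinuousLinearMap

variable [IsProbabilityMeasure μ] [Fact (1 ≤ p)]

variable (μ p) in
noncomputable def meanFieldOp (A B : E →L[ℝ] F) : Lp E p μ →L[ℝ] Lp F p μ :=
  A.compLpL p μ + Lp.constL p μ ℝ ∘L B ∘L Lp.integralCLM μ p

@[simp] theorem meanFieldOp_apply (A B : E →L[ℝ] F) (f : Lp E p μ) :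
    meanFieldOp μ p A B f = A.compLp f + Lp.const p μ (B (∫ ω, f ω ∂μ)) := rfl

theorem meanFieldOp_comp [CompleteSpace E] [CompleteSpace F] (A B : F →L[ℝ] G)
    (C D : E →L[ℝ] F) :
    meanFieldOp μ p A B ∘L meanFieldOp μ p C D
      = meanFieldOp μ p (A ∘L C) (A ∘L D + B ∘L C + B ∘L D) := by
  ext1 f
  have hmean : ∫ ω, meanFieldOp μ p C D f ω ∂μ = C (∫ ω, f ω ∂μ) + D (∫ ω, f ω ∂μ) := by
    rw [← Lp.integralCLM_apply, meanFieldOp_apply, map_add, Lp.integralCLM_apply,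
      Lp.integralCLM_apply, C.integral_compLp_comm, Lp.integral_const]
  rw [comp_apply, meanFieldOp_apply _ _ (meanFieldOp μ p C D f), hmean, meanFieldOp_apply,
    meanFieldOp_apply, A.compLp_add, A.comp_compLp, A.compLp_const]
  simp only [add_apply, comp_apply, map_add]
  abel

theorem meanFieldOp_sub (A B C D : E →L[ℝ] F) :
    meanFieldOp μ p (A - C) (B - D) = meanFieldOp μ p A B - meanFieldOp μ p C D := by
  ext1 f
  simp only [meanFieldOp_apply, sub_apply, map_sub, sub_compLp]
  abel

theorem meanFieldOp_smul (c : ℝ) (A B : E →L[ℝ] F) :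
    meanFieldOp μ p (c • A) (c • B) = c • meanFieldOp μ p A B := by
  simp only [meanFieldOp, smul_compLpL, comp_smul, smul_comp, smul_add]

theorem HasDerivWithinAt.meanFieldOp_apply {A B : ℝ → E →L[ℝ] F} {A' B' : E →L[ℝ] F}
    {s : Set ℝ} {t : ℝ} (hA : HasDerivWithinAt A A' s t) (hB : HasDerivWithinAt B B' s t)
    (f : Lp E p μ) :
    HasDerivWithinAt (fun τ => meanFieldOp μ p (A τ) (B τ) f) (meanFieldOp μ p A' B' f) s t := by
  have hAf : HasDerivWithinAt (fun τ => (A τ).compLp f) (A'.compLp f) s t :=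
    ((compLpL₂ p μ (.id ℝ (E →L[ℝ] F))).flip f).hasFDerivAt.comp_hasDerivWithinAt t hA
  have hBf : HasDerivWithinAt (fun τ => B τ (∫ ω, f ω ∂μ)) (B' (∫ ω, f ω ∂μ)) s t :=
    (apply ℝ F (∫ ω, f ω ∂μ)).hasFDerivAt.comp_hasDerivWithinAt t hB
  exact hAf.add ((Lp.constL p μ ℝ (E := F)).hasFDerivAt.comp_hasDerivWithinAt t hBf)

end

theorem Uq_eq_meanFieldOp (μ : Measure Ω) [IsProbabilityMeasure μ]
    (P Sg : ℝ → EuclideanSpace ℝ (Fin n) →L[ℝ] EuclideanSpace ℝ (Fin n)) (t : ℝ) :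
    (fun X => Uq μ P Sg X t) = meanFieldOp μ 2 (P t) (Sg t) := rfl

theorem statement19_general (μ : Measure Ω) [IsProbabilityMeasure μ]
    (Q Qb QT QbT S ST : EuclideanSpace ℝ (Fin n) →L[ℝ] EuclideanSpace ℝ (Fin n))
    (T lam : ℝ)
    (P Sg : ℝ → EuclideanSpace ℝ (Fin n) →L[ℝ] EuclideanSpace ℝ (Fin n))
    (hP : ∀ τ ∈ Icc (0 : ℝ) T, HasDerivWithinAt P
      ((1 / lam) • (P τ ∘L P τ) - (Q + Qb)) (Icc 0 T) τ)
    (hPT : P T = QT + QbT)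
    (hSg : ∀ τ ∈ Icc (0 : ℝ) T, HasDerivWithinAt Sg
      ((1 / lam) • (Sg τ ∘L P τ + P τ ∘L Sg τ) + (1 / lam) • (Sg τ ∘L Sg τ)
        - adjoint S ∘L Qb ∘L S + (Qb ∘L S + adjoint S ∘L Qb)) (Icc 0 T) τ)
    (hSgT : Sg T = adjoint ST ∘L QbT ∘L ST - (QbT ∘L ST + adjoint ST ∘L QbT)) :
    ∀ X : Lp (EuclideanSpace ℝ (Fin n)) 2 μ, ∀ t ∈ Icc (0 : ℝ) T,
      ∃ DU : Lp (EuclideanSpace ℝ (Fin n)) 2 μ →L[ℝ] Lp (EuclideanSpace ℝ (Fin n)) 2 μ,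
        (∀ Z : Lp (EuclideanSpace ℝ (Fin n)) 2 μ,
          DU Z = (P t).compLp Z + Lp.const 2 μ (Sg t (expVal μ Z))) ∧
        HasFDerivAt (fun X' => Uq μ P Sg X' t) DU X ∧
        HasDerivWithinAt (fun τ => Uq μ P Sg X τ)
          ((1 / lam) • DU (Uq μ P Sg X t) -
            ((Q + Qb).compLp X + Lp.const 2 μ
              ((adjoint S ∘L Qb ∘L S - Qb ∘L S - adjoint S ∘L Qb) (expVal μ X))))
          (Icc 0 T) t ∧
        Uq μ P Sg X T = (QT + QbT).compLp X + Lp.const 2 μ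
          ((adjoint ST ∘L QbT ∘L ST - QbT ∘L ST - adjoint ST ∘L QbT) (expVal μ X)) := by
  intro X t ht
  refine ⟨meanFieldOp μ 2 (P t) (Sg t), fun Z => rfl, ?_, ?_, ?_⟩
  · rw [Uq_eq_meanFieldOp]
    exact (meanFieldOp μ 2 (P t) (Sg t)).hasFDerivAt
  · have hSg' : (1 / lam) • (Sg t ∘L P t + P t ∘L Sg t) + (1 / lam) • (Sg t ∘L Sg t)
          - adjoint S ∘L Qb ∘L S + (Qb ∘L S + adjoint S ∘L Qb)
        = (1 / lam) • (P t ∘L Sg t + Sg t ∘L P t + Sg t ∘L Sg t)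
          - (adjoint S ∘L Qb ∘L S - Qb ∘L S - adjoint S ∘L Qb) := by
      module
    have h := (hP t ht).meanFieldOp_apply (hSg t ht) X
    rwa [hSg', meanFieldOp_sub, meanFieldOp_smul, ← meanFieldOp_comp] at h
  · rw [Uq, hPT, hSgT, sub_add_eq_sub_sub]

/-- in the quadratic case, the map `U(X,t) = P(t) X + Σ(t) E X` built from the
solutions of the two Riccati equations solves the master equation in the Hilbert space
`H = L²(Ω;ℝⁿ)`, with Fréchet derivative acting as `D_X U(X,t) Z = P(t) Z + Σ(t) E Z` and the
prescribed terminal condition. -/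
theorem statement19 (μ : Measure Ω) [IsProbabilityMeasure μ]
    (Q Qb QT QbT S ST : EuclideanSpace ℝ (Fin n) →L[ℝ] EuclideanSpace ℝ (Fin n))
    (hQ : IsSelfAdjoint Q) (hQb : IsSelfAdjoint Qb)
    (hQT : IsSelfAdjoint QT) (hQbT : IsSelfAdjoint QbT)
    (T lam : ℝ) (hT : 0 < T) (hlam : 0 < lam)
    (P Sg : ℝ → EuclideanSpace ℝ (Fin n) →L[ℝ] EuclideanSpace ℝ (Fin n))
    (hP : ∀ τ ∈ Icc (0 : ℝ) T, HasDerivWithinAt P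
      ((1 / lam) • (P τ ∘L P τ) - (Q + Qb)) (Icc 0 T) τ)
    (hPT : P T = QT + QbT)
    (hSg : ∀ τ ∈ Icc (0 : ℝ) T, HasDerivWithinAt Sg
      ((1 / lam) • (Sg τ ∘L P τ + P τ ∘L Sg τ) + (1 / lam) • (Sg τ ∘L Sg τ)
        - adjoint S ∘L Qb ∘L S + (Qb ∘L S + adjoint S ∘L Qb)) (Icc 0 T) τ)
    (hSgT : Sg T = adjoint ST ∘L QbT ∘L ST - (QbT ∘L ST + adjoint ST ∘L QbT)) :
    ∀ X : Lp (EuclideanSpace ℝ (Fin n)) 2 μ, ∀ t ∈ Icc (0 : ℝ) T,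
      ∃ DU : Lp (EuclideanSpace ℝ (Fin n)) 2 μ →L[ℝ] Lp (EuclideanSpace ℝ (Fin n)) 2 μ,
        (∀ Z : Lp (EuclideanSpace ℝ (Fin n)) 2 μ,
          DU Z = (P t).compLp Z + Lp.const 2 μ (Sg t (expVal μ Z))) ∧
        HasFDerivAt (fun X' => Uq μ P Sg X' t) DU X ∧
        HasDerivWithinAt (fun τ => Uq μ P Sg X τ)
          ((1 / lam) • DU (Uq μ P Sg X t) -
            ((Q + Qb).compLp X + Lp.const 2 μ
              ((adjoint S ∘L Qb ∘L S - Qb ∘L S - adjoint S ∘L Qb) (expVal μ X))))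
          (Icc 0 T) t ∧
        Uq μ P Sg X T = (QT + QbT).compLp X + Lp.const 2 μ
          ((adjoint ST ∘L QbT ∘L ST - QbT ∘L ST - adjoint ST ∘L QbT) (expVal μ X)) :=
  statement19_general μ Q Qb QT QbT S ST T lam P Sg hP hPT hSg hSgT
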